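/- arXiv:2001.01159 — 2 statements merged into one kernel-verified Lean document; each statement's English description precedes it below -/
import Mathlib

section
/- Consider the n-fold memoryless BSC with crossover probability p ∈ (0,1/2) and a code 𝒞_n = {x_{(1)}, …, x_{(M)}} ⊆ {0,1}^n with M ≥ 2 distinct codewords. For each i, let T_i = { y : d(x_{(i)}, y) = min_{u∈𝒞_n\{x_{(i)}}} d(u,y) } and N_i = { y : d(x_{(i)}, y) > min_{u∈𝒞_n\{x_{(i)}}} d(u,y) }. Then Pr( Y^n ∈ N_i | X^n = x_{(i)} ) ≥ (p / (2(1−p))) · (1/(M−1)) · Pr( Y^n ∈ T_i | X^n = x_{(i)} ). -/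
/-!
Fix a tie `y`, i.e. an output at which some other codeword `u` is exactly as close as `x`.
Then `d(x, u) = 2k` with `k ≥ 1`, and `y` agrees with `x` but not with `u` on exactly `k`
coordinates. Flipping one of them multiplies `Wⁿ(y|x)` by `p / (1 - p)` and produces an output
whose distance to `u` is two less than its distance to `x`, hence one in `Nᵢ`. Such an output arises from at most
`k + 1` (tie, coordinate) pairs, so the ties assigned to `u` carry at most
`(k + 1)/k · (1 - p)/p ≤ 2 (1 - p)/p` times the mass of `Nᵢ`; summing over the `M - 1`
competitors gives the bound.
-/

open scoped Classical BigOperators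

/-- Transition probability of the `n`-fold memoryless BSC with crossover probability `p`:
`Wⁿ(y|x) = p^{d(x,y)} (1-p)^{n - d(x,y)}`. -/
noncomputable def bscW (n : ℕ) (p : ℝ) (x y : Fin n → Bool) : ℝ :=
  p ^ hammingDist x y * (1 - p) ^ (n - hammingDist x y)

/-- Minimum distance to `y` from codewords of `C` other than `x`:
`min_{u∈C, u≠x} d(u,y)`. -/
noncomputable def dmin (n : ℕ) (C : Finset (Fin n → Bool)) (x y : Fin n → Bool) : ℕ :=
  sInf {d : ℕ | ∃ u ∈ C, u ≠ x ∧ d = hammingDist u y}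

open Finset

section Flip

variable {ι : Type*} [DecidableEq ι]

def flipAt (j : ι) (y : ι → Bool) : ι → Bool :=
  Function.update y j (!y j)

@[simp]
lemma flipAt_apply_self (j : ι) (y : ι → Bool) : flipAt j y j = !y j := by
  simp [flipAt]

lemma flipAt_apply_of_ne {i j : ι} (h : i ≠ j) (y : ι → Bool) : flipAt j y i = y i := by
  simp [flipAt, h]

lemma flipAt_involutive (j : ι) : Function.Involutive (flipAt j) := by
  intro y
  funext i
  by_cases h : i = j
  · subst h; simp
  · simp [flipAt_apply_of_ne h]

variable [Fintype ι]

lemma hammingDist_flipAt_of_eq {j : ι} {w y : ι → Bool} (h : w j = y j) :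
    hammingDist w (flipAt j y) = hammingDist w y + 1 := by
  have : ({i | w i ≠ flipAt j y i} : Finset ι) = insert j ({i | w i ≠ y i} : Finset ι) := by
    ext i
    by_cases hij : i = j
    · subst hij; simp [h]
    · simp [flipAt_apply_of_ne hij, hij]
  rw [hammingDist, this, card_insert_of_notMem (by simp [h]), hammingDist]

lemma hammingDist_flipAt_of_ne {j : ι} {w y : ι → Bool} (h : w j ≠ y j) :
    hammingDist w (flipAt j y) + 1 = hammingDist w y := by
  have : ({i | w i ≠ flipAt j y i} : Finset ι) = ({i | w i ≠ y i} : Finset ι).erase j := by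
    ext i
    by_cases hij : i = j
    · subst hij; simp [Bool.eq_not.2 h]
    · simp [flipAt_apply_of_ne hij, hij]
  rw [hammingDist, this, card_erase_add_one (by simp [h]), hammingDist]

end Flip

section AgreeOnly

variable {ι α : Type*} [Fintype ι] [DecidableEq α]

def agreeOnly (x u y : ι → α) : Finset ι :=
  {i | x i = y i ∧ u i ≠ y i}

lemma hammingDist_add_card_agreeOnly (x u y : ι → α) :
    hammingDist x y + #(agreeOnly x u y) = #{i | x i ≠ y i ∨ u i ≠ y i} := by
  rw [hammingDist, agreeOnly, ← card_union_of_disjoint (disjoint_filter.2 fun _ _ h h' => h h'.1),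
    ← filter_or]
  congr 1
  ext i
  simp only [mem_filter, mem_univ, true_and]
  tauto

lemma card_agreeOnly_add_card_agreeOnly (x u y : ι → Bool) :
    #(agreeOnly x u y) + #(agreeOnly u x y) = hammingDist x u := by
  rw [hammingDist, agreeOnly, agreeOnly, ← card_union_of_disjoint
    (disjoint_filter.2 fun _ _ h h' => h.2 h'.1), ← filter_or]
  congr 1
  ext i
  simp only [mem_filter, mem_univ, true_and]
  cases x i <;> cases u i <;> cases y i <;> simp

lemma two_mul_card_agreeOnly (x u y : ι → Bool) :
    2 * #(agreeOnly x u y) + hammingDist x y = hammingDist x u + hammingDist u y := by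
  have h₁ := hammingDist_add_card_agreeOnly x u y
  have h₂ := hammingDist_add_card_agreeOnly u x y
  have h₃ := card_agreeOnly_add_card_agreeOnly x u y
  have h₄ : #({i | x i ≠ y i ∨ u i ≠ y i} : Finset ι) =
      #({i | u i ≠ y i ∨ x i ≠ y i} : Finset ι) := by
    simp only [or_comm]
  omega

lemma two_mul_card_agreeOnly_of_tie {x u y : ι → Bool}
    (h : hammingDist x y = hammingDist u y) : 2 * #(agreeOnly x u y) = hammingDist x u := by
  have := two_mul_card_agreeOnly x u y
  omega

lemma two_mul_card_agreeOnly_of_add_two {x u y : ι → Bool}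
    (h : hammingDist u y + 2 = hammingDist x y) :
    2 * #(agreeOnly u x y) = hammingDist x u + 2 := by
  have := two_mul_card_agreeOnly u x y
  rw [hammingDist_comm u x] at this
  omega

lemma mem_agreeOnly_flipAt [DecidableEq ι] {x u y : ι → Bool} {j : ι}
    (hj : j ∈ agreeOnly x u y) : j ∈ agreeOnly u x (flipAt j y) := by
  simp only [agreeOnly, mem_filter, mem_univ, true_and, flipAt_apply_self] at hj ⊢
  cases hx : x j <;> cases hu : u j <;> cases hy : y j <;> simp_all

end AgreeOnly

lemma sum_sum_flipAt_le {ι : Type*} [Fintype ι] [DecidableEq ι] {x u : ι → Bool}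
    {A : Finset (ι → Bool)} (hA : ∀ y ∈ A, hammingDist x y = hammingDist u y)
    {f : (ι → Bool) → ℝ} (hf : ∀ y, 0 ≤ f y) :
    ∑ y ∈ A, ∑ j ∈ agreeOnly x u y, f (flipAt j y)
      ≤ ∑ y with hammingDist u y + 2 = hammingDist x y, ∑ _j ∈ agreeOnly u x y, f y := by
  set g : (Σ _ : ι → Bool, ι) → (Σ _ : ι → Bool, ι) := fun s => ⟨flipAt s.2 s.1, s.2⟩
  have hg_inj : Set.InjOn g (A.sigma (agreeOnly x u)) := by
    rintro ⟨y, j⟩ - ⟨y', j'⟩ - h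
    simp only [g, Sigma.mk.inj_iff, heq_eq_eq] at h
    obtain ⟨h, rfl⟩ := h
    rw [(flipAt_involutive j).injective h]
  have hg_maps : ∀ s ∈ A.sigma (agreeOnly x u),
      g s ∈ ({y | hammingDist u y + 2 = hammingDist x y} : Finset _).sigma (agreeOnly u x) := by
    rintro ⟨y, j⟩ hs
    rw [mem_sigma] at hs ⊢
    obtain ⟨hy, hj⟩ := hs
    refine ⟨?_, mem_agreeOnly_flipAt hj⟩
    simp only [g, agreeOnly, mem_filter, mem_univ, true_and] at hj ⊢
    have hx := hammingDist_flipAt_of_eq hj.1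
    have hu := hammingDist_flipAt_of_ne hj.2
    have := hA y hy
    omega
  rw [sum_sigma', sum_sigma']
  calc ∑ s ∈ A.sigma (agreeOnly x u), f (flipAt s.2 s.1)
      = ∑ s ∈ (A.sigma (agreeOnly x u)).image g, f s.1 :=
        (sum_image (f := fun s => f s.1) hg_inj).symm
    _ ≤ _ := sum_le_sum_of_subset_of_nonneg (image_subset_iff.2 hg_maps) fun s _ _ => hf _

section Channel

variable {n : ℕ} {p : ℝ}

lemma bscW_nonneg (hp0 : 0 ≤ p) (hp1 : p ≤ 1) (x y : Fin n → Bool) : 0 ≤ bscW n p x y := by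
  have : 0 ≤ 1 - p := by linarith
  unfold bscW
  positivity

lemma mul_bscW_eq_of_hammingDist_eq_succ {x y y' : Fin n → Bool}
    (h : hammingDist x y' = hammingDist x y + 1) :
    p * bscW n p x y = (1 - p) * bscW n p x y' := by
  have hle : hammingDist x y' ≤ n := by
    simpa using hammingDist_le_card_fintype (x := x) (y := y')
  obtain ⟨m, hm⟩ : ∃ m, n - hammingDist x y = m + 1 := ⟨n - hammingDist x y', by omega⟩
  unfold bscW
  rw [h, hm, show n - (hammingDist x y + 1) = m by omega]
  ring

lemma mul_sum_card_agreeOnly_mul_bscW_le (hp1 : p ≤ 1) {x u : Fin n → Bool}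
    {A : Finset (Fin n → Bool)} (hA : ∀ y ∈ A, hammingDist x y = hammingDist u y)
    (hW : ∀ y, 0 ≤ bscW n p x y) :
    p * ∑ y ∈ A, #(agreeOnly x u y) * bscW n p x y
      ≤ (1 - p) * ∑ y with hammingDist u y + 2 = hammingDist x y,
          #(agreeOnly u x y) * bscW n p x y :=
  calc p * ∑ y ∈ A, #(agreeOnly x u y) * bscW n p x y
      = (1 - p) * ∑ y ∈ A, ∑ j ∈ agreeOnly x u y, bscW n p x (flipAt j y) := by
        rw [mul_sum, mul_sum]
        refine sum_congr rfl fun y _ => ?_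
        have hflip : ∀ j ∈ agreeOnly x u y,
            p * bscW n p x y = (1 - p) * bscW n p x (flipAt j y) := fun j hj =>
          mul_bscW_eq_of_hammingDist_eq_succ (hammingDist_flipAt_of_eq (mem_filter.1 hj).2.1)
        rw [mul_sum, ← sum_congr rfl hflip, sum_const, nsmul_eq_mul]
        ring
    _ ≤ (1 - p) * ∑ y with hammingDist u y + 2 = hammingDist x y,
          ∑ _j ∈ agreeOnly u x y, bscW n p x y :=
        mul_le_mul_of_nonneg_left (sum_sum_flipAt_le hA hW) (by linarith)
    _ = _ := by simp only [sum_const, nsmul_eq_mul]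

lemma mul_sum_bscW_le_of_tie (hp0 : 0 < p) (hp1 : p < 1) {x u : Fin n → Bool} (hxu : x ≠ u)
    {A : Finset (Fin n → Bool)} (hA : ∀ y ∈ A, hammingDist x y = hammingDist u y) :
    p * ∑ y ∈ A, bscW n p x y
      ≤ 2 * (1 - p) * ∑ y with hammingDist u y + 2 = hammingDist x y, bscW n p x y := by
  set B : Finset (Fin n → Bool) := {y | hammingDist u y + 2 = hammingDist x y}
  have hW := bscW_nonneg hp0.le hp1.le x
  have hB : 0 ≤ (1 - p) * ∑ y ∈ B, bscW n p x y :=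
    mul_nonneg (by linarith) (sum_nonneg fun y _ => hW y)
  rcases A.eq_empty_or_nonempty with rfl | ⟨y₀, hy₀⟩
  · rw [sum_empty, mul_zero, mul_assoc]
    exact mul_nonneg zero_le_two hB
  set k := #(agreeOnly x u y₀)
  have hk : 2 * k = hammingDist x u := two_mul_card_agreeOnly_of_tie (hA y₀ hy₀)
  have hk_pos : (1 : ℝ) ≤ k := by
    have := hammingDist_pos.2 hxu
    norm_cast
    omega
  have hS : ∀ y ∈ A, #(agreeOnly x u y) = k := fun y hy => by
    have := two_mul_card_agreeOnly_of_tie (hA y hy)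
    omega
  have hJ : ∀ y ∈ B, #(agreeOnly u x y) = k + 1 := fun y hy => by
    have := two_mul_card_agreeOnly_of_add_two (mem_filter.1 hy).2
    omega
  have hSum : ∑ y ∈ A, #(agreeOnly x u y) * bscW n p x y = k * ∑ y ∈ A, bscW n p x y := by
    rw [mul_sum]
    exact sum_congr rfl fun y hy => by rw [hS y hy]
  have hJSum : ∑ y ∈ B, #(agreeOnly u x y) * bscW n p x y
      = (k + 1) * ∑ y ∈ B, bscW n p x y := by
    rw [mul_sum]
    exact sum_congr rfl fun y hy => by rw [hJ y hy]; push_cast; rfl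
  have key : p * (k * ∑ y ∈ A, bscW n p x y) ≤ (1 - p) * ((k + 1) * ∑ y ∈ B, bscW n p x y) := by
    rw [← hSum, ← hJSum]
    exact mul_sum_card_agreeOnly_mul_bscW_le hp1.le hA hW
  refine le_of_mul_le_mul_left ?_ (by linarith : (0 : ℝ) < k)
  nlinarith

end Channel

lemma dmin_le_hammingDist {n : ℕ} {C : Finset (Fin n → Bool)} {x u : Fin n → Bool}
    (hu : u ∈ C) (hux : u ≠ x) (y : Fin n → Bool) : dmin n C x y ≤ hammingDist u y :=
  Nat.sInf_le ⟨u, hu, hux, rfl⟩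

lemma exists_hammingDist_eq_dmin {n : ℕ} {C : Finset (Fin n → Bool)} {x : Fin n → Bool}
    (hC : (C.erase x).Nonempty) (y : Fin n → Bool) :
    ∃ u ∈ C.erase x, hammingDist u y = dmin n C x y := by
  obtain ⟨u₀, hu₀⟩ := hC
  obtain ⟨u, hu, hux, hd⟩ :=
    Nat.sInf_mem (s := {d | ∃ u ∈ C, u ≠ x ∧ d = hammingDist u y})
    ⟨_, u₀, (mem_erase.1 hu₀).2, (mem_erase.1 hu₀).1, rfl⟩
  exact ⟨u, mem_erase.2 ⟨hux, hu⟩, hd.symm⟩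

lemma mul_sum_bscW_le_of_nearest {n : ℕ} {p : ℝ} (hp0 : 0 < p) (hp1 : p < 1)
    {C : Finset (Fin n → Bool)} {x u : Fin n → Bool} (hu : u ∈ C) (hux : u ≠ x)
    {A : Finset (Fin n → Bool)} (hA : ∀ y ∈ A, hammingDist x y = hammingDist u y) :
    p * ∑ y ∈ A, bscW n p x y
      ≤ 2 * (1 - p) * ∑ y with dmin n C x y < hammingDist x y, bscW n p x y := by
  refine (mul_sum_bscW_le_of_tie hp0 hp1 hux.symm hA).trans <| mul_le_mul_of_nonneg_left
    (sum_le_sum_of_subset_of_nonneg (fun y hy => ?_) fun y _ _ => bscW_nonneg hp0.le hp1.le x y)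
    (by linarith)
  simp only [mem_filter, mem_univ, true_and] at hy ⊢
  have := dmin_le_hammingDist hu hux y
  omega

/-- **Conditional probability of the strict set dominates that of the tie set.**
For the `n`-fold BSC with crossover probability `p ∈ (0,1/2)`, a code `C` of `M ≥ 2`
distinct codewords, and a codeword `x ∈ C`, with
`Tᵢ = {y : d(x,y) = min_{u∈C, u≠x} d(u,y)}` and
`Nᵢ = {y : d(x,y) > min_{u∈C, u≠x} d(u,y)}`, one has
`Pr(Yⁿ ∈ Nᵢ | Xⁿ = x) ≥ (p/(2(1-p))) · (1/(M-1)) · Pr(Yⁿ ∈ Tᵢ | Xⁿ = x)`. -/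
theorem stmt_16 (n : ℕ) (p : ℝ) (hp0 : 0 < p) (hp2 : p < 1 / 2)
    (C : Finset (Fin n → Bool)) (hC : 2 ≤ C.card)
    (x : Fin n → Bool) (hx : x ∈ C) :
    (∑ y ∈ Finset.univ.filter (fun y : Fin n → Bool =>
        dmin n C x y < hammingDist x y), bscW n p x y)
      ≥ (p / (2 * (1 - p))) * (1 / ((C.card : ℝ) - 1)) *
        ∑ y ∈ Finset.univ.filter (fun y : Fin n → Bool =>
          hammingDist x y = dmin n C x y), bscW n p x y := by
  have hp1 : p < 1 := by linarith
  set N : Finset (Fin n → Bool) := {y | dmin n C x y < hammingDist x y}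
  set T : Finset (Fin n → Bool) := {y | hammingDist x y = dmin n C x y}
  choose v hvC hv using
    exists_hammingDist_eq_dmin (card_pos.1 (by rw [card_erase_of_mem hx]; omega))
  have htotal : p * ∑ y ∈ T, bscW n p x y
      ≤ ((C.card : ℝ) - 1) * (2 * (1 - p) * ∑ y ∈ N, bscW n p x y) := by
    rw [← sum_fiberwise_of_maps_to fun y _ => hvC y, mul_sum]
    refine (sum_le_sum fun u hu => mul_sum_bscW_le_of_nearest hp0 hp1 (mem_erase.1 hu).2
      (mem_erase.1 hu).1 fun y hy => ?_).trans_eq ?_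
    · simp only [T, mem_filter, mem_univ, true_and] at hy
      rw [hy.1, ← hy.2, hv]
    · rw [sum_const, card_erase_of_mem hx, nsmul_eq_mul, Nat.cast_sub (by omega), Nat.cast_one]
  have hM : (1 : ℝ) ≤ (C.card : ℝ) - 1 := by
    have : (2 : ℝ) ≤ C.card := by exact_mod_cast hC
    linarith
  have hq : 0 < 1 - p := by linarith
  calc p / (2 * (1 - p)) * (1 / ((C.card : ℝ) - 1)) * ∑ y ∈ T, bscW n p x y
      = (p * ∑ y ∈ T, bscW n p x y) / (((C.card : ℝ) - 1) * (2 * (1 - p))) := by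
        field_simp
    _ ≤ ∑ y ∈ N, bscW n p x y := by
        rw [div_le_iff₀ (by positivity)]
        linarith
end

section
/- Consider the n-fold memoryless BSC with crossover probability p ∈ (0,1/2), a code 𝒞_n ⊆ {0,1}^n with M_n = |𝒞_n| ≥ 2, and X^n uniform on 𝒞_n. Let b_n = P_{X^n,Y^n}(NT(𝒞_n)) and δ_n = P_{X^n,Y^n}(T(𝒞_n)). Then b_n ≥ (p / (2(1−p))) · (1/(M_n − 1)) · δ_n. -/
open scoped Classical BigOperators

/-- Joint distribution of input and output of the `n`-fold memoryless BSC with crossover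
probability `p`, with input uniform over the code `C ⊆ {0,1}ⁿ`:
`P_{Xⁿ,Yⁿ}(x,y) = 1{x ∈ C} · |C|⁻¹ · p^{d(x,y)} (1-p)^{n - d(x,y)}`. -/
noncomputable def bscJoint (n : ℕ) (p : ℝ) (C : Finset (Fin n → Bool))
    (x y : Fin n → Bool) : ℝ :=
  (if x ∈ C then ((C.card : ℝ))⁻¹ else 0) *
    p ^ hammingDist x y * (1 - p) ^ (n - hammingDist x y)

/-- `bₙ = P_{Xⁿ,Yⁿ}(NT(C))`, probability of the strict-tie-breaking set
`NT(C) = {(x,y) ∈ C × {0,1}ⁿ : d(x,y) > min_{u∈C, u≠x} d(u,y)}`. -/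
noncomputable def bNT (n : ℕ) (p : ℝ) (C : Finset (Fin n → Bool)) : ℝ :=
  ∑ q ∈ Finset.univ.filter (fun q : (Fin n → Bool) × (Fin n → Bool) =>
      q.1 ∈ C ∧ dmin n C q.1 q.2 < hammingDist q.1 q.2),
    bscJoint n p C q.1 q.2

/-- `δₙ = P_{Xⁿ,Yⁿ}(T(C))`, probability of the set of ties
`T(C) = {(x,y) ∈ C × {0,1}ⁿ : d(x,y) = min_{u∈C, u≠x} d(u,y)}`. -/
noncomputable def deltaT (n : ℕ) (p : ℝ) (C : Finset (Fin n → Bool)) : ℝ :=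
  ∑ q ∈ Finset.univ.filter (fun q : (Fin n → Bool) × (Fin n → Bool) =>
      q.1 ∈ C ∧ hammingDist q.1 q.2 = dmin n C q.1 q.2),
    bscJoint n p C q.1 q.2

/-!
Every tie `(x, y)` has a rival codeword `u ≠ x` at the same distance from `y`. Flipping `y` at
the first coordinate where `x` and `u` differ moves it one step away from one of them and one
step towards the other, so the result is a pair in `NT` whose probability is `p / (1 - p)` times
that of `(x, y)`. A pair `b ∈ NT` arises in this way from at most `2 (M - 1)` ties, since the tie
is determined by the other codeword of `{x, u}` and by whether `x` is the codeword of `b`.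
Summing over the ties gives `p δ ≤ (1 - p) · 2 (M - 1) · b`.
-/

open Finset

theorem Finset.sum_comp_le_mul_sum_of_maps_to {ι κ R : Type*} [DecidableEq κ]
    [Semiring R] [PartialOrder R] [IsOrderedRing R]
    {s : Finset ι} {t : Finset κ} {g : ι → κ} (hg : ∀ i ∈ s, g i ∈ t) {f : κ → R}
    (hf : ∀ j ∈ t, 0 ≤ f j) (K : ℕ) (hK : ∀ j ∈ t, #{i ∈ s | g i = j} ≤ K) :
    ∑ i ∈ s, f (g i) ≤ K * ∑ j ∈ t, f j := by
  rw [← sum_fiberwise_of_maps_to' hg, mul_sum]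
  refine sum_le_sum fun j hj => ?_
  rw [sum_const, nsmul_eq_mul]
  exact mul_le_mul_of_nonneg_right (Nat.mono_cast (hK j hj)) (hf j hj)

theorem hammingDist_update_add {ι β : Type*} [Fintype ι] [DecidableEq ι] [DecidableEq β]
    (a y : ι → β) (i : ι) (b : β) :
    hammingDist a (Function.update y i b) + (if a i ≠ y i then 1 else 0)
      = hammingDist a y + (if a i ≠ b then 1 else 0) := by
  simp only [hammingDist, card_filter]
  rw [← add_sum_erase _ _ (mem_univ i), ← add_sum_erase _ _ (mem_univ i), Function.update_self]
  have hrest : ∑ j ∈ univ.erase i, (if a j ≠ Function.update y i b j then 1 else 0)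
      = ∑ j ∈ univ.erase i, (if a j ≠ y j then 1 else 0) :=
    sum_congr rfl fun j hj => by rw [Function.update_of_ne (ne_of_mem_erase hj)]
  rw [hrest]
  ring

namespace BSC

variable {n : ℕ}

def flipAt (y : Fin n → Bool) (k : WithTop (Fin n)) : Fin n → Bool :=
  fun j => if (j : WithTop (Fin n)) = k then !y j else y j

theorem flipAt_flipAt (y : Fin n → Bool) (k : WithTop (Fin n)) : flipAt (flipAt y k) k = y := by
  funext j
  by_cases h : (j : WithTop (Fin n)) = k <;> simp [flipAt, h]

theorem flipAt_coe (y : Fin n → Bool) (i : Fin n) :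
    flipAt y i = Function.update y i (!y i) := by
  funext j
  by_cases h : j = i
  · subst h; simp [flipAt]
  · simp [flipAt, h]

theorem hammingDist_flipAt_of_eq {a y : Fin n → Bool} {i : Fin n} (h : a i = y i) :
    hammingDist a (flipAt y i) = hammingDist a y + 1 := by
  have := hammingDist_update_add a y i (!y i)
  rw [← flipAt_coe] at this
  simpa [h] using this

theorem hammingDist_flipAt_of_ne {a y : Fin n → Bool} {i : Fin n} (h : a i ≠ y i) :
    hammingDist a (flipAt y i) + 1 = hammingDist a y := by
  have := hammingDist_update_add a y i (!y i)
  rw [← flipAt_coe] at this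
  simpa [h, Bool.eq_not.mpr h] using this

/-- `⊤` when `x = u`. -/
def pivot (x u : Fin n → Bool) : WithTop (Fin n) :=
  ({i | x i ≠ u i} : Finset (Fin n)).min

theorem pivot_comm (x u : Fin n → Bool) : pivot x u = pivot u x := by
  simp only [pivot, ne_comm]

theorem exists_pivot_eq {x u : Fin n → Bool} (h : x ≠ u) :
    ∃ i : Fin n, pivot x u = i ∧ x i ≠ u i := by
  obtain ⟨j, hj⟩ := Function.ne_iff.mp h
  obtain ⟨i, hi⟩ :=
    min_of_nonempty (s := ({i | x i ≠ u i} : Finset (Fin n))) ⟨j, by simpa using hj⟩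
  exact ⟨i, hi, by simpa using mem_of_min hi⟩

def tieMove (x u y : Fin n → Bool) : (Fin n → Bool) × (Fin n → Bool) :=
  let y' := flipAt y (pivot x u)
  (if hammingDist x y < hammingDist x y' then x else u, y')

theorem tieMove_cases {x u : Fin n → Bool} (hxu : x ≠ u) (y : Fin n → Bool) :
    let y' := flipAt y (pivot x u)
    (tieMove x u y = (x, y') ∧ hammingDist x y' = hammingDist x y + 1 ∧
        hammingDist u y' + 1 = hammingDist u y) ∨
      (tieMove x u y = (u, y') ∧ hammingDist u y' = hammingDist u y + 1 ∧
        hammingDist x y' + 1 = hammingDist x y) := by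
  obtain ⟨i, hi, hxui⟩ := exists_pivot_eq hxu
  simp only [tieMove, hi]
  by_cases hxy : x i = y i
  · have hx := hammingDist_flipAt_of_eq hxy
    refine Or.inl ⟨by rw [if_pos (by omega)], hx, hammingDist_flipAt_of_ne (hxy ▸ hxui.symm)⟩
  · have hx := hammingDist_flipAt_of_ne hxy
    have huy : u i = y i := by
      revert hxui hxy; cases x i <;> cases u i <;> cases y i <;> decide
    exact Or.inr ⟨by rw [if_neg (by omega)], hammingDist_flipAt_of_eq huy, hx⟩

variable {C : Finset (Fin n → Bool)} {x u y : Fin n → Bool}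

theorem dmin_le_hammingDist (hu : u ∈ C) (hux : u ≠ x) : dmin n C x y ≤ hammingDist u y :=
  Nat.sInf_le ⟨u, hu, hux, rfl⟩

theorem exists_hammingDist_eq_dmin (hC : 1 < #C) (x y : Fin n → Bool) :
    ∃ u ∈ C, u ≠ x ∧ hammingDist u y = dmin n C x y := by
  obtain ⟨v, hv, hvx⟩ := exists_mem_ne hC x
  obtain ⟨u, hu, hux, hd⟩ := Nat.sInf_mem (s := {d | ∃ u ∈ C, u ≠ x ∧ d = hammingDist u y})
    ⟨_, v, hv, hvx, rfl⟩
  exact ⟨u, hu, hux, hd.symm⟩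

theorem tieMove_spec (hx : x ∈ C) (hu : u ∈ C) (hxu : x ≠ u)
    (hd : hammingDist u y = hammingDist x y) :
    (tieMove x u y).1 ∈ C ∧
      dmin n C (tieMove x u y).1 (tieMove x u y).2 <
        hammingDist (tieMove x u y).1 (tieMove x u y).2 ∧
      hammingDist (tieMove x u y).1 (tieMove x u y).2 = hammingDist x y + 1 := by
  rcases tieMove_cases hxu y with ⟨h, hfar, hnear⟩ | ⟨h, hfar, hnear⟩ <;> rw [h] <;> dsimp only
  · have := dmin_le_hammingDist (y := flipAt y (pivot x u)) hu hxu.symm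
    exact ⟨hx, by omega, hfar⟩
  · have := dmin_le_hammingDist (y := flipAt y (pivot x u)) hx hxu
    exact ⟨hu, by omega, by omega⟩

/-- Recovers `(x, y)` from `b = tieMove x u y`, given the other codeword of `{x, u}` and
whether `x = b.1`. -/
def tieBack (b : (Fin n → Bool) × (Fin n → Bool)) (vt : (Fin n → Bool) × Bool) :
    (Fin n → Bool) × (Fin n → Bool) :=
  (if vt.2 then b.1 else vt.1, flipAt b.2 (pivot b.1 vt.1))

theorem mem_image_tieBack (hx : x ∈ C) (hu : u ∈ C) (hxu : x ≠ u) :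
    (x, y) ∈ ((C.erase (tieMove x u y).1) ×ˢ (univ : Finset Bool)).image
      (tieBack (tieMove x u y)) := by
  rcases tieMove_cases hxu y with ⟨h, -⟩ | ⟨h, -⟩ <;> rw [h, mem_image]
  · exact ⟨(u, true), by simp [hu, hxu.symm], by simp [tieBack, flipAt_flipAt]⟩
  · exact ⟨(x, false), by simp [hx, hxu], by simp [tieBack, pivot_comm u x, flipAt_flipAt]⟩

theorem card_filter_tieMove_eq_le {s : Finset ((Fin n → Bool) × (Fin n → Bool))}
    {rival : (Fin n → Bool) × (Fin n → Bool) → Fin n → Bool}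
    (hs : ∀ q ∈ s, q.1 ∈ C ∧ rival q ∈ C ∧ q.1 ≠ rival q)
    {b : (Fin n → Bool) × (Fin n → Bool)} (hb : b.1 ∈ C) :
    #{q ∈ s | tieMove q.1 (rival q) q.2 = b} ≤ 2 * (#C - 1) := by
  calc #{q ∈ s | tieMove q.1 (rival q) q.2 = b}
      ≤ #(((C.erase b.1) ×ˢ (univ : Finset Bool)).image (tieBack b)) := by
        refine card_le_card fun q hq => ?_
        obtain ⟨hqs, rfl⟩ := mem_filter.mp hq
        obtain ⟨hx, hu, hxu⟩ := hs q hqs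
        exact mem_image_tieBack hx hu hxu
    _ ≤ #((C.erase b.1) ×ˢ (univ : Finset Bool)) := card_image_le
    _ = 2 * (#C - 1) := by
        rw [card_product, card_erase_of_mem hb, card_univ,
          Fintype.card_bool, mul_comm]

theorem bscJoint_nonneg {p : ℝ} (hp0 : 0 ≤ p) (hp1 : p ≤ 1) (C : Finset (Fin n → Bool))
    (x y : Fin n → Bool) : 0 ≤ bscJoint n p C x y := by
  have : 0 ≤ 1 - p := by linarith
  unfold bscJoint
  split_ifs <;> positivity

theorem bscJoint_mul_one_sub_of_hammingDist_eq_succ {p : ℝ} {x' y' : Fin n → Bool}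
    (hx : x ∈ C) (hx' : x' ∈ C) (hd : hammingDist x' y' = hammingDist x y + 1) :
    (1 - p) * bscJoint n p C x' y' = p * bscJoint n p C x y := by
  have hle : hammingDist x' y' ≤ n := by simpa using hammingDist_le_card_fintype (x := x') (y := y')
  obtain ⟨k, hk⟩ : ∃ k, n - hammingDist x y = k + 1 := ⟨n - hammingDist x' y', by omega⟩
  have hk' : n - (hammingDist x y + 1) = k := by omega
  rw [bscJoint, bscJoint, if_pos hx, if_pos hx', hd, hk, hk', pow_succ, pow_succ]
  ring

theorem mul_deltaT_le {p : ℝ} (hp0 : 0 ≤ p) (hp1 : p ≤ 1) (hC : 1 < #C) :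
    p * deltaT n p C ≤ (1 - p) * ((2 * (#C - 1) : ℕ) * bNT n p C) := by
  set T := univ.filter (fun q : (Fin n → Bool) × (Fin n → Bool) =>
      q.1 ∈ C ∧ hammingDist q.1 q.2 = dmin n C q.1 q.2)
  set NT := univ.filter (fun q : (Fin n → Bool) × (Fin n → Bool) =>
      q.1 ∈ C ∧ dmin n C q.1 q.2 < hammingDist q.1 q.2)
  have hrival : ∀ q ∈ T, ∃ u ∈ C, u ≠ q.1 ∧ hammingDist u q.2 = hammingDist q.1 q.2 := by
    intro q hq
    obtain ⟨-, hx, htie⟩ := mem_filter.mp hq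
    simpa only [htie] using exists_hammingDist_eq_dmin hC q.1 q.2
  choose! rival hrivalC hrivalne hrivald using hrival
  have hmove : ∀ q ∈ T, _ := fun q hq =>
    tieMove_spec (mem_filter.mp hq).2.1 (hrivalC q hq) (hrivalne q hq).symm (hrivald q hq)
  have hmaps : ∀ q ∈ T, tieMove q.1 (rival q) q.2 ∈ NT := fun q hq =>
    mem_filter.mpr ⟨mem_univ _, (hmove q hq).1, (hmove q hq).2.1⟩
  have hfiber : ∀ b ∈ NT, #{q ∈ T | tieMove q.1 (rival q) q.2 = b} ≤ 2 * (#C - 1) :=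
    fun b hb => card_filter_tieMove_eq_le (fun q hq =>
      ⟨(mem_filter.mp hq).2.1, hrivalC q hq, (hrivalne q hq).symm⟩) (mem_filter.mp hb).2.1
  calc p * deltaT n p C
      = (1 - p) * ∑ q ∈ T, bscJoint n p C (tieMove q.1 (rival q) q.2).1
          (tieMove q.1 (rival q) q.2).2 := by
        rw [deltaT, mul_sum, mul_sum]
        exact sum_congr rfl fun q hq =>
          (bscJoint_mul_one_sub_of_hammingDist_eq_succ (mem_filter.mp hq).2.1
            (hmove q hq).1 (hmove q hq).2.2).symm
    _ ≤ (1 - p) * ((2 * (#C - 1) : ℕ) * bNT n p C) :=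
        mul_le_mul_of_nonneg_left (sum_comp_le_mul_sum_of_maps_to hmaps
          (fun b _ => bscJoint_nonneg hp0 hp1 C b.1 b.2) _ hfiber) (by linarith)

end BSC

open BSC

/-- **`bₙ ≥ (p/(2(1-p))) · (1/(Mₙ-1)) · δₙ`** for the `n`-fold BSC with crossover
probability `p ∈ (0,1/2)`, a code `C` with `Mₙ = |C| ≥ 2` and uniform input on `C`. -/
theorem stmt_17 (n : ℕ) (p : ℝ) (hp0 : 0 < p) (hp2 : p < 1 / 2)
    (C : Finset (Fin n → Bool)) (hC : 2 ≤ C.card) :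
    bNT n p C ≥ (p / (2 * (1 - p))) * (1 / ((C.card : ℝ) - 1)) * deltaT n p C := by
  have key := mul_deltaT_le hp0.le (by linarith) hC
  have hM : ((2 * (#C - 1) : ℕ) : ℝ) = 2 * ((#C : ℝ) - 1) := by
    push_cast [Nat.cast_sub (by omega : 1 ≤ #C)]; ring
  have hM1 : (0 : ℝ) < #C - 1 := by
    have : (2 : ℝ) ≤ #C := by exact_mod_cast hC
    linarith
  have hp1 : 0 < 1 - p := by linarith
  rw [hM] at key
  calc p / (2 * (1 - p)) * (1 / ((#C : ℝ) - 1)) * deltaT n p C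
      = p * deltaT n p C / ((1 - p) * (2 * ((#C : ℝ) - 1))) := by field_simp
    _ ≤ bNT n p C := by rw [div_le_iff₀ (by positivity)]; linarith
end
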